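/- Let R be the calculus with axioms (R₁)–(R₄). For every nonempty word α over 𝒜 and all 𝒜-formulas A, B with word(A) = word(B) = α, one has R ⊢ A ⇒ B: there exist formulas C₀ = A, C₁, …, C_n = B (n ≥ 0) such that R ⊢ C_i → C_{i+1} for all 0 ≤ i ≤ n−1. -/

import Mathlib

namespace PC

/-- `{→}`-formulas over a countably infinite set of propositional variables. -/
inductive Fml : Type where
  | var : ℕ → Fml
  | imp : Fml → Fml → Fml
deriving DecidableEq

namespace Fml

/-- Application of a substitution to a formula. -/
def subst (σ : ℕ → Fml) : Fml → Fml
  | var n => σ n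
  | imp A B => imp (subst σ A) (subst σ B)

/-- The set of variables of a formula. -/
def fvars : Fml → Finset ℕ
  | var n => {n}
  | imp A B => fvars A ∪ fvars B

/-- Derivability from a set of axioms by modus ponens and substitution. -/
inductive Deriv (P : Set Fml) : Fml → Prop
  | ax {A : Fml} : A ∈ P → Deriv P A
  | mp {A B : Fml} : Deriv P A → Deriv P (imp A B) → Deriv P B
  | sub {A : Fml} (σ : ℕ → Fml) : Deriv P A → Deriv P (subst σ A)

end Fml

/-- `B̂`: the result of substituting `B` for the variable `x` (= `var 0`) in `x̂`. -/
def hat (xhat B : Fml) : Fml := Fml.subst (fun n => if n = 0 then B else Fml.var n) xhat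

/-- `A ∘ B := ((B̂ → B̂) → B̂) → (Â → ((B̂ → B̂) → B̂))`. -/
def circ (xhat A B : Fml) : Fml :=
  .imp (.imp (.imp (hat xhat B) (hat xhat B)) (hat xhat B))
    (.imp (hat xhat A) (.imp (.imp (hat xhat B) (hat xhat B)) (hat xhat B)))

/-- `A · B := ((A → A) → A) ∘ B`. -/
def dot (xhat A B : Fml) : Fml := circ xhat (.imp (.imp A A) A) B

/-- `Cform i` is the formula `p → (p → … (p → p))` with `i` antecedents `p`,
where `p := var 0`. -/
def Cform : ℕ → Fml
  | 0 => .var 0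
  | n + 1 => .imp (.var 0) (Cform n)

/-- The code of the letter `aᵢ` (letters of the alphabet `𝒜 = {a₁, …, a_m}` are the
elements of `Fin m`, the letter `a : Fin m` standing for `a_{a+1}`): `Cᵢ ∘ p`. -/
def letterCode (xhat : Fml) {m : ℕ} (a : Fin m) : Fml :=
  circ xhat (Cform (a.val + 1)) (.var 0)

/-- Formal alphabetic-formula trees over the alphabet `Fin m`. -/
inductive ATree (m : ℕ) : Type where
  | leaf : Fin m → ATree m
  | node : ATree m → ATree m → ATree m

/-- The word associated with an alphabetic formula. -/
def ATree.word {m : ℕ} : ATree m → List (Fin m)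
  | .leaf a => [a]
  | .node l r => l.word ++ r.word

/-- The `{→}`-formula denoted by an alphabetic-formula tree. -/
def ATree.toFml {m : ℕ} (xhat : Fml) : ATree m → Fml
  | .leaf a => letterCode xhat a
  | .node l r => dot xhat (l.toFml xhat) (r.toFml xhat)

/-- `A` is an alphabetic formula (an `𝒜`-formula). -/
def IsAForm (m : ℕ) (xhat : Fml) (A : Fml) : Prop := ∃ t : ATree m, t.toFml xhat = A

/-- The code `͞α` of a word `α`: the set of all `𝒜`-formulas `A` with `word(A) = α`. -/
def codeSet {m : ℕ} (xhat : Fml) (α : List (Fin m)) : Set Fml :=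
  { A | ∃ t : ATree m, t.word = α ∧ t.toFml xhat = A }

/-- `A*`: the set of substitution instances of `A`. -/
def Inst (A : Fml) : Set Fml := { B | ∃ σ, Fml.subst σ A = B }

/-- `M*`: the set of substitution instances of members of `M`. -/
def InstSet (M : Set Fml) : Set Fml := { B | ∃ A ∈ M, ∃ σ, Fml.subst σ A = B }

/-- A tag system over the alphabet `Fin m`: the words `ω₁, …, ω_m` and the
deletion number `d`. -/
structure TagSystem (m : ℕ) where
  W : Fin m → List (Fin m)
  d : ℕ

/-- One-step production: `ξ ↦_T ζ` iff `ξ = aᵢβγ` with `|β| = d − 1` and `ζ = γωᵢ`. -/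
def TagStep {m : ℕ} (T : TagSystem m) (ξ ζ : List (Fin m)) : Prop :=
  ∃ (i : Fin m) (β γ : List (Fin m)),
    β.length = T.d - 1 ∧ ξ = i :: (β ++ γ) ∧ ζ = γ ++ T.W i

/-- `ξ ⟾_T ζ`: reflexive-transitive closure of one-step production. -/
def TagProd {m : ℕ} (T : TagSystem m) : List (Fin m) → List (Fin m) → Prop :=
  Relation.ReflTransGen (TagStep T)

/-- `T` halts on `ξ`. -/
def TagHalts {m : ℕ} (T : TagSystem m) (ξ : List (Fin m)) : Prop :=
  ∃ ζ, TagProd T ξ ζ ∧ ζ.length < T.d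

/-- The variables `x, y, z, u` used in the axiom schemes. -/
def Xv : Fml := .var 1
def Yv : Fml := .var 2
def Zv : Fml := .var 3
def Uv : Fml := .var 4

/-- The axioms (R₁)–(R₄). -/
def Raxioms (xhat : Fml) : Set Fml :=
  { .imp (dot xhat Xv (dot xhat Yv Zv)) (dot xhat (dot xhat Xv Yv) Zv),
    .imp (dot xhat (dot xhat Xv Yv) Zv) (dot xhat Xv (dot xhat Yv Zv)),
    .imp (dot xhat (dot xhat Xv (dot xhat Yv Zv)) Uv)
      (dot xhat (dot xhat (dot xhat Xv Yv) Zv) Uv),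
    .imp (dot xhat (dot xhat (dot xhat Xv Yv) Zv) Uv)
      (dot xhat (dot xhat Xv (dot xhat Yv Zv)) Uv) }

/-- The axioms (T₁) and (T₂) of `P_T`. -/
def Taxioms {m : ℕ} (xhat : Fml) (T : TagSystem m) : Set Fml :=
  { F | ∃ (i : Fin m) (α : List (Fin m)) (A B : Fml),
      α.length = T.d - 1 ∧ A ∈ codeSet xhat (i :: α) ∧ B ∈ codeSet xhat (T.W i) ∧
      (F = .imp (dot xhat A Xv) (dot xhat Xv B) ∨ F = .imp A B) }

/-- The calculus `P_T`. -/
def PT {m : ℕ} (xhat : Fml) (T : TagSystem m) : Set Fml := Taxioms xhat T ∪ Raxioms xhat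

/-- `P ⊢ A ⇒ B`: there are `C₀ = A, …, C_n = B` with `P ⊢ Cᵢ → Cᵢ₊₁` for all `i`. -/
def DChain (P : Set Fml) : Fml → Fml → Prop :=
  Relation.ReflTransGen (fun C D => Fml.Deriv P (.imp C D))

/-- `T_α`: the set of `𝒜`-formulas `A` with `α ⟾_T word(A)`. -/
def Tset {m : ℕ} (xhat : Fml) (T : TagSystem m) (α : List (Fin m)) : Set Fml :=
  { A | ∃ t : ATree m, t.toFml xhat = A ∧ TagProd T α t.word }

/-- The halting-condition axioms (H) for the calculus `P₀`. -/
def Haxioms {m : ℕ} (xhat : Fml) (T : TagSystem m) (P₀ : Finset Fml) : Set Fml :=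
  { F | ∃ (α : List (Fin m)) (A B : Fml), α ≠ [] ∧ α.length < T.d ∧
      A ∈ codeSet xhat α ∧ B ∈ P₀ ∧ F = .imp A B }

/-- The calculus `P_{T,P₀}`. -/
def PTP0 {m : ℕ} (xhat : Fml) (T : TagSystem m) (P₀ : Finset Fml) : Set Fml :=
  PT xhat T ∪ Haxioms xhat T P₀

/-- The calculus `P_{T,P₀,ξ}`. -/
def PTP0xi {m : ℕ} (xhat : Fml) (T : TagSystem m) (P₀ : Finset Fml)
    (ξ : List (Fin m)) : Set Fml :=
  PT xhat T ∪ Haxioms xhat T P₀ ∪ codeSet xhat ξ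

/-- `⟨P⟩`: formulas obtained from `P` by one application of modus ponens or
substitution. -/
def stepOnce (P : Set Fml) : Set Fml :=
  { B | ∃ A, A ∈ P ∧ Fml.imp A B ∈ P } ∪ { B | ∃ A ∈ P, ∃ σ, Fml.subst σ A = B }

/-- `⟨P⟩_n`. -/
def stepIter (P : Set Fml) : ℕ → Set Fml
  | 0 => P
  | n + 1 => stepOnce (stepIter P n)

/-- The single axiom `x → (y → x)`. -/
def Kax : Fml := .imp (.var 0) (.imp (.var 1) (.var 0))

/-- An effective encoding of `{→}`-formulas as natural numbers. -/
def encFml : Fml → ℕ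
  | .var n => Nat.pair 0 n
  | .imp A B => Nat.pair 1 (Nat.pair (encFml A) (encFml B))

/-- The fixed effective encoding of `{→}`-calculi (finite sets of formulas)
as natural numbers. -/
def encCalc (P : Finset Fml) : ℕ :=
  Encodable.encode ((P.image encFml).sort (· ≤ ·))


/-! (R₁)/(R₂) reassociate `A · (B · C) ⇄ (A · B) · C` at the top of a formula and (R₃)/(R₄) do
so inside the left factor of a product; since `x̂` has `x` as its only variable, substitution
commutes with `·`, so every instance of these moves is derivable in both directions. They suffice
to bring any `𝒜`-formula into the right-comb form `a₁ · (a₂ · (⋯ · aₙ))`, which is determined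
by the word. First rotate at the top until the right factor is a letter, `Q · b`. Then, for a
product `Q · R` with `R` a right comb, rotate inside the left factor until it reads `(Q' · b) · R`
and move `b` into the comb: `Q' · (b · R)`, where `Q'` has a shorter word. -/

namespace Fml

theorem subst_subst (σ τ : ℕ → Fml) (A : Fml) :
    subst σ (subst τ A) = subst (fun n => subst σ (τ n)) A := by
  induction A with
  | var n => rfl
  | imp A B ihA ihB => simp only [subst, ihA, ihB]

theorem subst_congr {σ τ : ℕ → Fml} {A : Fml} (h : ∀ n ∈ A.fvars, σ n = τ n) :
    subst σ A = subst τ A := by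
  induction A with
  | var n => exact h n (Finset.mem_singleton_self n)
  | imp A B ihA ihB =>
    simp only [fvars, Finset.mem_union] at h
    rw [subst, subst, ihA fun n hn => h n (.inl hn), ihB fun n hn => h n (.inr hn)]

end Fml

section Substitution

variable {xhat : Fml} (hx : xhat.fvars = {0})
include hx

theorem subst_hat (σ : ℕ → Fml) (B : Fml) :
    Fml.subst σ (hat xhat B) = hat xhat (Fml.subst σ B) := by
  rw [hat, hat, Fml.subst_subst]
  refine Fml.subst_congr fun n hn => ?_
  rw [hx, Finset.mem_singleton] at hn
  simp [hn]

theorem subst_dot (σ : ℕ → Fml) (A B : Fml) :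
    Fml.subst σ (dot xhat A B) = dot xhat (Fml.subst σ A) (Fml.subst σ B) := by
  simp only [dot, circ, Fml.subst, subst_hat hx]

end Substitution

def Interchain (P : Set Fml) (A B : Fml) : Prop := DChain P A B ∧ DChain P B A

namespace Interchain

variable {P : Set Fml} {A B C : Fml}

theorem refl (A : Fml) : Interchain P A A := ⟨.refl, .refl⟩

theorem symm (h : Interchain P A B) : Interchain P B A := ⟨h.2, h.1⟩

theorem trans (h₁ : Interchain P A B) (h₂ : Interchain P B C) : Interchain P A C :=
  ⟨h₁.1.trans h₂.1, h₂.2.trans h₁.2⟩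

theorem of_deriv (h₁ : Fml.Deriv P (.imp A B)) (h₂ : Fml.Deriv P (.imp B A)) :
    Interchain P A B :=
  ⟨.single h₁, .single h₂⟩

end Interchain

def xyzuSubst (A B C D : Fml) (n : ℕ) : Fml :=
  if n = 1 then A else if n = 2 then B else if n = 3 then C else if n = 4 then D else .var n

section Rotation

variable {xhat : Fml} (hx : xhat.fvars = {0})
include hx

theorem interchain_dot_assoc (A B C : Fml) :
    Interchain (Raxioms xhat) (dot xhat A (dot xhat B C)) (dot xhat (dot xhat A B) C) := by
  refine .of_deriv ?_ ?_
  · simpa [Fml.subst, subst_dot hx, xyzuSubst, Xv, Yv, Zv] using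
      Fml.Deriv.sub (P := Raxioms xhat) (xyzuSubst A B C (.var 4)) (.ax (.inl rfl))
  · simpa [Fml.subst, subst_dot hx, xyzuSubst, Xv, Yv, Zv] using
      Fml.Deriv.sub (P := Raxioms xhat) (xyzuSubst A B C (.var 4))
        (.ax (.inr <| .inl rfl))

theorem interchain_dot_assoc_left (A B C D : Fml) :
    Interchain (Raxioms xhat) (dot xhat (dot xhat A (dot xhat B C)) D)
      (dot xhat (dot xhat (dot xhat A B) C) D) := by
  refine .of_deriv ?_ ?_
  · simpa [Fml.subst, subst_dot hx, xyzuSubst, Xv, Yv, Zv, Uv] using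
      Fml.Deriv.sub (P := Raxioms xhat) (xyzuSubst A B C D) (.ax (.inr <| .inr <| .inl rfl))
  · simpa [Fml.subst, subst_dot hx, xyzuSubst, Xv, Yv, Zv, Uv] using
      Fml.Deriv.sub (P := Raxioms xhat) (xyzuSubst A B C D) (.ax (.inr <| .inr <| .inr rfl))

end Rotation

namespace ATree

variable {m : ℕ}

theorem word_ne_nil : ∀ t : ATree m, t.word ≠ []
  | leaf _ => List.cons_ne_nil _ _
  | node l _ => by simp [word, l.word_ne_nil]

inductive IsRightComb : ATree m → Prop
  | leaf (a : Fin m) : IsRightComb (leaf a)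
  | cons (a : Fin m) {t : ATree m} : IsRightComb t → IsRightComb (node (leaf a) t)

theorem IsRightComb.eq_of_word_eq {s t : ATree m} (hs : s.IsRightComb) (ht : t.IsRightComb)
    (h : s.word = t.word) : s = t := by
  induction hs generalizing t with
  | leaf a =>
    cases ht with
    | leaf b => simpa [word] using h
    | cons b ht => simp [word, word_ne_nil] at h
  | cons a hs ih =>
    cases ht with
    | leaf b => simp [word, word_ne_nil] at h
    | cons b ht =>
      simp only [word, List.singleton_append, List.cons.injEq] at h
      rw [h.1, ih ht h.2]

end ATree

open ATree

section Normalization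

variable {xhat : Fml} {m : ℕ}

theorem exists_interchain_node_leaf {P : Set Fml} (ctx : Fml → Fml)
    (hctx : ∀ A B C,
      Interchain P (ctx (dot xhat A (dot xhat B C))) (ctx (dot xhat (dot xhat A B) C)))
    (l r : ATree m) :
    ∃ (Q : ATree m) (b : Fin m), (node Q (leaf b)).word = (node l r).word ∧
      Interchain P (ctx ((node l r).toFml xhat)) (ctx ((node Q (leaf b)).toFml xhat)) := by
  induction r generalizing l with
  | leaf b => exact ⟨l, b, rfl, .refl _⟩
  | node r₁ r₂ _ ih =>
    obtain ⟨Q, b, hw, hQ⟩ := ih (node l r₁)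
    refine ⟨Q, b, ?_, (hctx _ _ _).trans hQ⟩
    simp only [word, List.append_assoc] at hw ⊢
    exact hw

variable (hx : xhat.fvars = {0})
include hx

theorem exists_isRightComb_interchain_dot (t R : ATree m) (hR : R.IsRightComb) :
    ∃ S : ATree m, S.IsRightComb ∧ S.word = t.word ++ R.word ∧
      Interchain (Raxioms xhat) (dot xhat (t.toFml xhat) (R.toFml xhat)) (S.toFml xhat) := by
  induction hn : t.word.length using Nat.strong_induction_on generalizing t R with
  | _ n ih =>
    cases t with
    | leaf a => exact ⟨node (leaf a) R, .cons a hR, rfl, .refl _⟩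
    | node l r =>
      obtain ⟨Q, b, hw, hflat⟩ := exists_interchain_node_leaf (fun A => dot xhat A (R.toFml xhat))
        (fun A B C => interchain_dot_assoc_left hx A B C (R.toFml xhat)) l r
      have hlen : Q.word.length < n := by
        rw [← hn, ← hw]
        simp [word]
      obtain ⟨S, hS, hSw, hQ⟩ := ih _ hlen Q (node (leaf b) R) (.cons b hR) rfl
      refine ⟨S, hS, ?_, hflat.trans ((interchain_dot_assoc hx _ _ _).symm.trans hQ)⟩
      rw [hSw, ← hw]
      simp [word]

theorem exists_isRightComb_interchain (t : ATree m) :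
    ∃ S : ATree m, S.IsRightComb ∧ S.word = t.word ∧
      Interchain (Raxioms xhat) (t.toFml xhat) (S.toFml xhat) := by
  cases t with
  | leaf a => exact ⟨leaf a, .leaf a, rfl, .refl _⟩
  | node l r =>
    obtain ⟨Q, b, hw, hflat⟩ := exists_interchain_node_leaf id (interchain_dot_assoc hx) l r
    obtain ⟨S, hS, hSw, hQ⟩ := exists_isRightComb_interchain_dot hx Q (leaf b) (.leaf b)
    exact ⟨S, hS, hSw.trans hw, hflat.trans hQ⟩

end Normalization

theorem R_chain_general (xhat : Fml) (hx : xhat.fvars = {0})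
    (m : ℕ) (α : List (Fin m))
    (A B : Fml) (hA : A ∈ codeSet xhat α) (hB : B ∈ codeSet xhat α) :
    DChain (Raxioms xhat) A B := by
  obtain ⟨t, rfl, rfl⟩ := hA
  obtain ⟨s, hst, rfl⟩ := hB
  obtain ⟨S, hS, hSw, htS⟩ := exists_isRightComb_interchain hx t
  obtain ⟨S', hS', hS'w, hsS'⟩ := exists_isRightComb_interchain hx s
  obtain rfl : S = S' := hS.eq_of_word_eq hS' (by rw [hSw, hS'w, hst])
  exact (htS.trans hsS'.symm).1

/-- Let `R` be the calculus with axioms (R₁)–(R₄). For every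
nonempty word `α` over `𝒜` and all `𝒜`-formulas `A, B` with
`word(A) = word(B) = α`, one has `R ⊢ A ⇒ B`. -/
theorem R_chain (xhat : Fml) (hx : xhat.fvars = {0})
    (m : ℕ) (α : List (Fin m)) (hα : α ≠ [])
    (A B : Fml) (hA : A ∈ codeSet xhat α) (hB : B ∈ codeSet xhat α) :
    DChain (Raxioms xhat) A B :=
  R_chain_general xhat hx m α A B hA hB

end PC
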